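/- arXiv:1706.07604 — 9 statements merged into one kernel-verified Lean document; each statement's English description precedes it below -/
import Mathlib

section
/- Let J = {1,…,n} be a finite set of jobs with processing times p_j > 0 and release times r_j ≥ 0, and let real numbers (C_j)_{j∈J} satisfy the parallel inequalities. Then for every nonempty U ⊆ J, p(U) ≤ 2·C_max(U) − 2·r_min(U), where C_max(U) = max_{j∈U} C_j. -/
theorem Finset.sum_mul_le_sum_mul_sup' {ι R : Type*} [Semiring R] [LinearOrder R]
    [IsOrderedAddMonoid R] [PosMulMono R] {s : Finset ι} (hs : s.Nonempty) {w f : ι → R}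
    (hw : ∀ i ∈ s, 0 ≤ w i) :
    ∑ i ∈ s, w i * f i ≤ (∑ i ∈ s, w i) * s.sup' hs f := by
  rw [Finset.sum_mul]
  exact Finset.sum_le_sum fun i hi => mul_le_mul_of_nonneg_left (Finset.le_sup' f hi) (hw i hi)

theorem lp_total_processing_upper_bound_general
    {n : ℕ} (p r C : Fin n → ℝ)
    (hp : ∀ j, 0 < p j)
    (hLP : ∀ (U : Finset (Fin n)) (hU : U.Nonempty),
      U.inf' hU r * ∑ j ∈ U, p j + (∑ j ∈ U, p j) ^ 2 / 2 ≤ ∑ j ∈ U, p j * C j) :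
    ∀ (U : Finset (Fin n)) (hU : U.Nonempty),
      ∑ j ∈ U, p j ≤ 2 * U.sup' hU C - 2 * U.inf' hU r := by
  intro U hU
  set P := ∑ j ∈ U, p j
  have hP : 0 < P := Finset.sum_pos (fun j _ => hp j) hU
  have hLP_max : U.inf' hU r * P + P ^ 2 / 2 ≤ P * U.sup' hU C :=
    (hLP U hU).trans (Finset.sum_mul_le_sum_mul_sup' hU fun j _ => (hp j).le)
  have hdiv : U.inf' hU r + P / 2 ≤ U.sup' hU C :=
    le_of_mul_le_mul_left (by linarith) hP
  linarith

/-- If `C` satisfies the parallel inequalities, then for every nonempty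
`U ⊆ J` we have `p(U) ≤ 2 · C_max(U) − 2 · r_min(U)`. -/
theorem lp_total_processing_upper_bound
    {n : ℕ} (p r C : Fin n → ℝ)
    (hp : ∀ j, 0 < p j) (hr : ∀ j, 0 ≤ r j)
    (hLP : ∀ (U : Finset (Fin n)) (hU : U.Nonempty),
      U.inf' hU r * ∑ j ∈ U, p j + (∑ j ∈ U, p j) ^ 2 / 2 ≤ ∑ j ∈ U, p j * C j) :
    ∀ (U : Finset (Fin n)) (hU : U.Nonempty),
      ∑ j ∈ U, p j ≤ 2 * U.sup' hU C - 2 * U.inf' hU r :=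
  lp_total_processing_upper_bound_general p r C hp hLP
end

section
/- Suppose release dates are consistent with precedence constraints, i.e., r_j ≤ r_k whenever j ≺ k, and let σ be a feasible schedule with the list-scheduling property. Then σ has the following early-start property: for every time t at which the machine is available, if there is a job j with r_j ≤ t and S_j ≥ t, then some job h with h ≤ j has S_h = t. -/
/-!
If the machine is idle at `t` and some released job `j` has not started, then some job
`k ≤ j` is available at `t`: either `j` itself, or a predecessor `l ≺ j` that has not
completed; such an `l` has not started either, since the machine is idle, and it is
released because release dates respect precedence, so we descend to `l < j`. The
available job of smallest index is then `≤ j`, and list scheduling starts it at `t`.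
-/

section ListScheduling

variable {ι : Type*} [LinearOrder ι]

def JobAvailable (p r S : ι → ℝ) (prec : ι → ι → Prop) (t : ℝ) (k : ι) : Prop :=
  r k ≤ t ∧ t ≤ S k ∧ ∀ l, prec l k → S l + p l ≤ t

def MachineAvailable (p S : ι → ℝ) (t : ℝ) : Prop :=
  ∀ h, S h + p h ≤ t ∨ t ≤ S h

variable {p r S : ι → ℝ} {prec : ι → ι → Prop}

theorem exists_jobAvailable_le [WellFoundedLT ι]
    (hprec_lt : ∀ j k, prec j k → j < k) (hrcons : ∀ j k, prec j k → r j ≤ r k)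
    {t : ℝ} (hmach : MachineAvailable p S t) (j : ι) (hrj : r j ≤ t) (hSj : t ≤ S j) :
    ∃ k ≤ j, JobAvailable p r S prec t k := by
  induction j using WellFoundedLT.induction with
  | _ j ih =>
    by_cases hpred : ∀ l, prec l j → S l + p l ≤ t
    · exact ⟨j, le_rfl, hrj, hSj, hpred⟩
    · push Not at hpred
      obtain ⟨l, hlj, hl_busy⟩ := hpred
      have hSl : t ≤ S l := (hmach l).resolve_left hl_busy.not_ge
      obtain ⟨k, hkl, hk⟩ :=
        ih l (hprec_lt l j hlj) ((hrcons l j hlj).trans hrj) hSl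
      exact ⟨k, hkl.trans (hprec_lt l j hlj).le, hk⟩

end ListScheduling

theorem list_scheduling_early_start_property_general
    {n : ℕ} (p r : Fin n → ℝ) (prec : Fin n → Fin n → Prop)
    (hprec_lt : ∀ j k, prec j k → j < k)
    (hrcons : ∀ j k, prec j k → r j ≤ r k)
    (S : Fin n → ℝ)
    (hLS : ∀ t : ℝ, (∀ h, S h + p h ≤ t ∨ t ≤ S h) →
      ∀ j, (r j ≤ t ∧ t ≤ S j ∧ ∀ k, prec k j → S k + p k ≤ t) →
        (∀ k, (r k ≤ t ∧ t ≤ S k ∧ ∀ l, prec l k → S l + p l ≤ t) → j ≤ k) →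
        S j = t) :
    ∀ t : ℝ, (∀ h, S h + p h ≤ t ∨ t ≤ S h) →
      ∀ j, r j ≤ t → t ≤ S j → ∃ h, h ≤ j ∧ S h = t := by
  intro t hmach j hrj hSj
  obtain ⟨k, hkj, hk⟩ := exists_jobAvailable_le hprec_lt hrcons hmach j hrj hSj
  obtain ⟨m, hm, hmin⟩ :=
    wellFounded_lt.has_min {k' | JobAvailable p r S prec t k'} ⟨k, hk⟩
  have hm_least : ∀ k', JobAvailable p r S prec t k' → m ≤ k' :=
    fun k' hk' => not_lt.mp (hmin k' hk')
  exact ⟨m, (hm_least k hk).trans hkj, hLS t hmach m hm hm_least⟩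

/-- Lemma 1 of the paper: If release dates are consistent with precedence
constraints and `σ` is a feasible schedule with the list-scheduling property, then for
every time `t` at which the machine is available, if some job `j` has `r j ≤ t` and has
not started yet (`S j ≥ t`), then some job `h ≤ j` starts exactly at time `t`.

A job `k` is available at `t` iff `r k ≤ t`, `t ≤ S k`, and every predecessor of `k` has
completed by `t`; the machine is available at `t` iff every job completes by `t` or starts
at or after `t`; the list-scheduling property says that whenever the machine is available
and jobs are available, the available job of smallest index starts at `t`. -/
theorem list_scheduling_early_start_property
    {n : ℕ} (p r : Fin n → ℝ) (prec : Fin n → Fin n → Prop)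
    (hr : ∀ j, 0 ≤ r j)
    (hprec_lt : ∀ j k, prec j k → j < k)
    (htrans : ∀ i j k, prec i j → prec j k → prec i k)
    (hrcons : ∀ j k, prec j k → r j ≤ r k)
    (S : Fin n → ℝ)
    (hrel : ∀ j, r j ≤ S j)
    (hdisj : ∀ j k, j ≠ k → S k + p k ≤ S j ∨ S j + p j ≤ S k)
    (hprecS : ∀ j k, prec j k → S j + p j ≤ S k)
    (hLS : ∀ t : ℝ, (∀ h, S h + p h ≤ t ∨ t ≤ S h) →
      ∀ j, (r j ≤ t ∧ t ≤ S j ∧ ∀ k, prec k j → S k + p k ≤ t) →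
        (∀ k, (r k ≤ t ∧ t ≤ S k ∧ ∀ l, prec l k → S l + p l ≤ t) → j ≤ k) →
        S j = t) :
    ∀ t : ℝ, (∀ h, S h + p h ≤ t ∨ t ≤ S h) →
      ∀ j, r j ≤ t → t ≤ S j → ∃ h, h ≤ j ∧ S h = t :=
  list_scheduling_early_start_property_general p r prec hprec_lt hrcons S hLS
end

section
/- Let σ be a feasible schedule of a single-machine instance with p_j > 0 and r_j ≥ 0, and let (C_j)_{j∈J} satisfy the parallel inequalities. Let j ∈ U ⊆ J with C_h ≤ C_j for every h ∈ U, and let t ∈ ℝ be such that C^σ_j = t + p(U). Then C^σ_j ≤ t + 2·C_j − 2·r_min(U). -/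
open Finset

lemma Finset.sum_mul_le_sum_mul_of_le {ι R : Type*} [Semiring R] [PartialOrder R]
    [IsOrderedRing R] {s : Finset ι} {w f : ι → R} {M : R}
    (hw : ∀ i ∈ s, 0 ≤ w i) (hf : ∀ i ∈ s, f i ≤ M) :
    ∑ i ∈ s, w i * f i ≤ (∑ i ∈ s, w i) * M := by
  rw [sum_mul]
  exact sum_le_sum fun i hi => mul_le_mul_of_nonneg_left (hf i hi) (hw i hi)

lemma le_two_mul_sub_two_mul_of_mul_add_sq_div_two_le {K : Type*} [Field K] [LinearOrder K]
    [IsStrictOrderedRing K] {a c P : K} (hP : 0 < P)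
    (h : a * P + P ^ 2 / 2 ≤ P * c) : P ≤ 2 * c - 2 * a := by
  have hmul : P * (a + P / 2) ≤ P * c := by linarith
  linarith [le_of_mul_le_mul_left hmul hP]

lemma sum_le_two_mul_sub_inf'_of_parallel_inequality {ι K : Type*} [Field K] [LinearOrder K]
    [IsStrictOrderedRing K] {p r C : ι → K}
    {U : Finset ι} (hp : ∀ i ∈ U, 0 < p i) (hU : U.Nonempty)
    (hLP : U.inf' hU r * ∑ i ∈ U, p i + (∑ i ∈ U, p i) ^ 2 / 2 ≤ ∑ i ∈ U, p i * C i)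
    {j : ι} (hmax : ∀ h ∈ U, C h ≤ C j) :
    ∑ i ∈ U, p i ≤ 2 * C j - 2 * U.inf' hU r := by
  have hupper : ∑ i ∈ U, p i * C i ≤ (∑ i ∈ U, p i) * C j :=
    sum_mul_le_sum_mul_of_le (fun i hi => (hp i hi).le) hmax
  exact le_two_mul_sub_two_mul_of_mul_add_sq_div_two_le (sum_pos hp hU)
    (hLP.trans hupper)

theorem key_lemma_first_inequality_general
    {n : ℕ} (p r C : Fin n → ℝ)
    (hp : ∀ j, 0 < p j)
    (S : Fin n → ℝ)
    (hLP : ∀ (U : Finset (Fin n)) (hU : U.Nonempty),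
      U.inf' hU r * ∑ j ∈ U, p j + (∑ j ∈ U, p j) ^ 2 / 2 ≤ ∑ j ∈ U, p j * C j)
    (U : Finset (Fin n)) (j : Fin n) (hjU : j ∈ U)
    (hmax : ∀ h ∈ U, C h ≤ C j)
    (t : ℝ) (ht : S j + p j = t + ∑ k ∈ U, p k) :
    S j + p j ≤ t + 2 * C j - 2 * U.inf' ⟨j, hjU⟩ r := by
  have hsum := sum_le_two_mul_sub_inf'_of_parallel_inequality (fun i _ => hp i) ⟨j, hjU⟩
    (hLP U ⟨j, hjU⟩) hmax
  linarith

/-- inequality (3) of the key lemma: For a feasible schedule `σ` and LP values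
`C` satisfying the parallel inequalities, if `j ∈ U`, `C h ≤ C j` for all `h ∈ U`, and
`C^σ_j = t + p(U)`, then `C^σ_j ≤ t + 2 C_j − 2 r_min(U)`. -/
theorem key_lemma_first_inequality
    {n : ℕ} (p r C : Fin n → ℝ) (prec : Fin n → Fin n → Prop)
    (hp : ∀ j, 0 < p j) (hr : ∀ j, 0 ≤ r j)
    (hprec_lt : ∀ j k, prec j k → j < k)
    (htrans : ∀ i j k, prec i j → prec j k → prec i k)
    (S : Fin n → ℝ)
    (hrel : ∀ j, r j ≤ S j)
    (hdisj : ∀ j k, j ≠ k → S k + p k ≤ S j ∨ S j + p j ≤ S k)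
    (hprecS : ∀ j k, prec j k → S j + p j ≤ S k)
    (hLP : ∀ (U : Finset (Fin n)) (hU : U.Nonempty),
      U.inf' hU r * ∑ j ∈ U, p j + (∑ j ∈ U, p j) ^ 2 / 2 ≤ ∑ j ∈ U, p j * C j)
    (U : Finset (Fin n)) (j : Fin n) (hjU : j ∈ U)
    (hmax : ∀ h ∈ U, C h ≤ C j)
    (t : ℝ) (ht : S j + p j = t + ∑ k ∈ U, p k) :
    S j + p j ≤ t + 2 * C j - 2 * U.inf' ⟨j, hjU⟩ r :=
  key_lemma_first_inequality_general p r C hp S hLP U j hjU hmax t ht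
end

section
/- Let σ be a feasible schedule of a single-machine instance with p_j > 0 and r_j ≥ 0, and let (C_j)_{j∈J} satisfy the parallel inequalities. Let j ∈ U ⊆ J with C_h ≤ C_j for every h ∈ U, and let t ∈ ℝ be such that C^σ_j = t + p(U) and t ≤ r_min(U). Then C^σ_j ≤ 2·C_j. -/
/-!
Averaging the parallel inequality for `U` with weights `p` and bounding every `C h` by the
maximum `C j` gives `r_min(U) + p(U)/2 ≤ C j`. Hence
`C^σ_j = t + p(U) ≤ r_min(U) + p(U) ≤ 2 (r_min(U) + p(U)/2) ≤ 2 C j`, using `r_min(U) ≥ 0`.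
-/

open Finset

namespace Finset

variable {ι : Type*} {U : Finset ι} {p r C : ι → ℝ}

theorem sum_mul_le_sum_mul_of_forall_le {c : ℝ} (hp : ∀ k ∈ U, 0 ≤ p k)
    (hC : ∀ k ∈ U, C k ≤ c) : ∑ k ∈ U, p k * C k ≤ (∑ k ∈ U, p k) * c := by
  rw [sum_mul]
  exact sum_le_sum fun k hk => mul_le_mul_of_nonneg_left (hC k hk) (hp k hk)

theorem inf'_add_half_sum_le_of_parallel {j : ι} (hjU : j ∈ U) (hp : ∀ k ∈ U, 0 < p k)
    (hLP : U.inf' ⟨j, hjU⟩ r * ∑ k ∈ U, p k + (∑ k ∈ U, p k) ^ 2 / 2 ≤ ∑ k ∈ U, p k * C k)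
    (hmax : ∀ k ∈ U, C k ≤ C j) :
    U.inf' ⟨j, hjU⟩ r + (∑ k ∈ U, p k) / 2 ≤ C j := by
  have hP : 0 < ∑ k ∈ U, p k := sum_pos hp ⟨j, hjU⟩
  have hmul : (U.inf' ⟨j, hjU⟩ r + (∑ k ∈ U, p k) / 2) * ∑ k ∈ U, p k
      ≤ C j * ∑ k ∈ U, p k := by
    calc _ = U.inf' ⟨j, hjU⟩ r * ∑ k ∈ U, p k + (∑ k ∈ U, p k) ^ 2 / 2 := by ring
      _ ≤ ∑ k ∈ U, p k * C k := hLP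
      _ ≤ (∑ k ∈ U, p k) * C j := sum_mul_le_sum_mul_of_forall_le (fun k hk => (hp k hk).le) hmax
      _ = C j * ∑ k ∈ U, p k := mul_comm _ _
  exact le_of_mul_le_mul_right hmul hP

end Finset

theorem key_lemma_second_inequality_general
    {n : ℕ} (p r C : Fin n → ℝ)
    (hp : ∀ j, 0 < p j) (hr : ∀ j, 0 ≤ r j)
    (S : Fin n → ℝ)
    (hLP : ∀ (U : Finset (Fin n)) (hU : U.Nonempty),
      U.inf' hU r * ∑ j ∈ U, p j + (∑ j ∈ U, p j) ^ 2 / 2 ≤ ∑ j ∈ U, p j * C j)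
    (U : Finset (Fin n)) (j : Fin n) (hjU : j ∈ U)
    (hmax : ∀ h ∈ U, C h ≤ C j)
    (t : ℝ) (ht : S j + p j = t + ∑ k ∈ U, p k)
    (htr : t ≤ U.inf' ⟨j, hjU⟩ r) :
    S j + p j ≤ 2 * C j := by
  have hLB := inf'_add_half_sum_le_of_parallel hjU (fun k _ => hp k) (hLP U ⟨j, hjU⟩) hmax
  have hrmin : 0 ≤ U.inf' ⟨j, hjU⟩ r := (le_inf'_iff _ _).2 fun k _ => hr k
  linarith

/-- inequality (4) of the key lemma: For a feasible schedule `σ` and LP values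
`C` satisfying the parallel inequalities, if `j ∈ U`, `C h ≤ C j` for all `h ∈ U`,
`C^σ_j = t + p(U)` and `t ≤ r_min(U)`, then `C^σ_j ≤ 2 C_j`. -/
theorem key_lemma_second_inequality
    {n : ℕ} (p r C : Fin n → ℝ) (prec : Fin n → Fin n → Prop)
    (hp : ∀ j, 0 < p j) (hr : ∀ j, 0 ≤ r j)
    (hprec_lt : ∀ j k, prec j k → j < k)
    (htrans : ∀ i j k, prec i j → prec j k → prec i k)
    (S : Fin n → ℝ)
    (hrel : ∀ j, r j ≤ S j)
    (hdisj : ∀ j k, j ≠ k → S k + p k ≤ S j ∨ S j + p j ≤ S k)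
    (hprecS : ∀ j k, prec j k → S j + p j ≤ S k)
    (hLP : ∀ (U : Finset (Fin n)) (hU : U.Nonempty),
      U.inf' hU r * ∑ j ∈ U, p j + (∑ j ∈ U, p j) ^ 2 / 2 ≤ ∑ j ∈ U, p j * C j)
    (U : Finset (Fin n)) (j : Fin n) (hjU : j ∈ U)
    (hmax : ∀ h ∈ U, C h ≤ C j)
    (t : ℝ) (ht : S j + p j = t + ∑ k ∈ U, p k)
    (htr : t ≤ U.inf' ⟨j, hjU⟩ r) :
    S j + p j ≤ 2 * C j :=
  key_lemma_second_inequality_general p r C hp hr S hLP U j hjU hmax t ht htr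
end

section
/- Suppose the instance satisfies p_j ≤ r_j for every job j, p_j > 0 for every j, and r_j ≤ r_k whenever j ≺ k. Let real numbers (C_j)_{j∈J} satisfy the parallel inequalities with C_1 ≤ C_2 ≤ … ≤ C_n, and let σ be a feasible schedule with the list-scheduling property (for the index order 1,…,n). Then Σ_{j∈J} w_j C^σ_j ≤ 2·Σ_{j∈J} w_j C_j. -/
/-!
It suffices to show `S j + p j ≤ 2 * C j` for every job `j`. Let `τ` be the earliest start
time from which the machine is busy with jobs of index `≤ j` without interruption until `j`
completes, and let `V` be the jobs of index `≤ j` started at or after `τ`. Then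
`S j + p j - τ ≤ p(V)`, and the parallel inequality for `V`, together with `C k ≤ C j` on `V`,
gives `r_min(V) + p(V)/2 ≤ C j`. It remains to see `τ ≤ 2 r_k` for `k ∈ V`. If `r_k < τ`,
list scheduling keeps the machine busy on `[r_k, τ)`, so some job `h` completes exactly at `τ`, and
`h > j` by the choice of `τ`. Since `h` was started at `S h` in preference to `k`, the job `k`
was not yet released: `S h < r_k`, and `τ = S h + p h ≤ 2 S h < 2 r_k` because
`p h ≤ r h ≤ S h`.
-/

open Finset Set MeasureTheory

theorem sub_le_sum_of_forall_mem_Ico {ι : Type*} (V : Finset ι) {s p : ι → ℝ}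
    (hp : ∀ k ∈ V, 0 ≤ p k) {a b : ℝ}
    (hcov : ∀ t ∈ Ico a b, ∃ k ∈ V, s k ≤ t ∧ t < s k + p k) :
    b - a ≤ ∑ k ∈ V, p k := by
  have hsub : Ico a b ⊆ ⋃ k ∈ V, Ico (s k) (s k + p k) := fun t ht => by
    simpa only [Set.mem_iUnion, Set.mem_Ico, exists_prop] using hcov t ht
  have hvol := (measure_mono (μ := volume) hsub).trans (measure_biUnion_finset_le V _)
  simp only [Real.volume_Ico, add_sub_cancel_left] at hvol
  rw [← ENNReal.ofReal_sum_of_nonneg hp] at hvol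
  exact (ENNReal.ofReal_le_ofReal_iff (Finset.sum_nonneg hp)).1 hvol

theorem exists_lt_le_of_forall_mem_Ico {ι : Type*} [Fintype ι] (s c : ι → ℝ) {a b : ℝ}
    (hab : a < b) (hcov : ∀ t ∈ Ico a b, ∃ i, s i ≤ t ∧ t < c i) :
    ∃ i, s i < b ∧ b ≤ c i := by
  classical
  by_contra! hnot
  -- the last right endpoint before `b` is covered by no interval
  set E := insert a ((Finset.univ.filter fun i => c i < b).image c)
  have hEb : ∀ x ∈ E, x < b := by
    simp only [E, Finset.mem_insert, Finset.mem_image, Finset.mem_filter]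
    rintro x (rfl | ⟨i, ⟨-, hi⟩, rfl⟩) <;> assumption
  have haE : a ∈ E := Finset.mem_insert_self _ _
  obtain ⟨i, hsi, hci⟩ :=
    hcov (E.max' ⟨a, haE⟩) ⟨E.le_max' a haE, hEb _ (E.max'_mem _)⟩
  have hciE : c i ∈ E := Finset.mem_insert_of_mem <|
    Finset.mem_image_of_mem c (Finset.mem_filter.2 ⟨Finset.mem_univ i,
      hnot i (hsi.trans_lt (hEb _ (E.max'_mem _)))⟩)
  exact (E.le_max' _ hciE).not_gt hci

theorem inf'_add_half_sum_le_of_parallel {ι : Type*} {s : Finset ι} (hs : s.Nonempty)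
    {p r C : ι → ℝ} {c : ℝ} (hp : ∀ k ∈ s, 0 < p k) (hC : ∀ k ∈ s, C k ≤ c)
    (hLP : s.inf' hs r * ∑ k ∈ s, p k + (∑ k ∈ s, p k) ^ 2 / 2 ≤ ∑ k ∈ s, p k * C k) :
    s.inf' hs r + (∑ k ∈ s, p k) / 2 ≤ c := by
  have hP : 0 < ∑ k ∈ s, p k := Finset.sum_pos hp hs
  have hPC : ∑ k ∈ s, p k * C k ≤ (∑ k ∈ s, p k) * c := by
    rw [Finset.sum_mul]
    exact Finset.sum_le_sum fun k hk => mul_le_mul_of_nonneg_left (hC k hk) (hp k hk).le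
  refine le_of_mul_le_mul_left ?_ hP
  linarith

section Scheduling

variable {ι : Type*} [LinearOrder ι]

def MachineFree (p S : ι → ℝ) (t : ℝ) : Prop :=
  ∀ h, S h + p h ≤ t ∨ t ≤ S h

def IsAvailable (p r S : ι → ℝ) (prec : ι → ι → Prop) (t : ℝ) (j : ι) : Prop :=
  r j ≤ t ∧ t ≤ S j ∧ ∀ k, prec k j → S k + p k ≤ t

structure IsListSchedule (p r S : ι → ℝ) (prec : ι → ι → Prop) : Prop where
  release_le : ∀ j, r j ≤ S j
  disjoint : ∀ j k, j ≠ k → S k + p k ≤ S j ∨ S j + p j ≤ S k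
  start_eq_of_isLeast :
    ∀ t, MachineFree p S t → ∀ j, IsLeast {k | IsAvailable p r S prec t k} j → S j = t

def IsBusyFrom (p S : ι → ℝ) (j : ι) (a : ℝ) : Prop :=
  ∀ t ∈ Ico a (S j + p j), ∃ h ≤ j, S h ≤ t ∧ t < S h + p h

variable {p r S : ι → ℝ} {prec : ι → ι → Prop}

theorem isBusyFrom_start (j : ι) : IsBusyFrom p S j (S j) :=
  fun _ ht => ⟨j, le_rfl, ht.1, ht.2⟩

theorem IsBusyFrom.of_start {j h : ι} {a : ℝ} (ha : IsBusyFrom p S j a) (hhj : h ≤ j)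
    (hCh : a ≤ S h + p h) : IsBusyFrom p S j (S h) := by
  rintro t ⟨ht₁, ht₂⟩
  rcases lt_or_ge t a with hta | hta
  · exact ⟨h, hhj, ht₁, hta.trans_le hCh⟩
  · exact ha t ⟨hta, ht₂⟩

namespace IsListSchedule

theorem start_injective (hS : IsListSchedule p r S prec) (hp : ∀ j, 0 < p j) :
    Function.Injective S := by
  intro j k hjk
  by_contra hne
  rcases hS.disjoint j k hne with h | h <;> linarith [hp j, hp k]

theorem machineFree_start (hS : IsListSchedule p r S prec) (hp : ∀ j, 0 < p j) (k : ι) :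
    MachineFree p S (S k) := by
  intro h
  rcases eq_or_ne h k with rfl | hne
  · exact Or.inr le_rfl
  · exact (hS.disjoint k h hne.symm).imp_right fun h' => by linarith [hp k]

-- Among the released, unstarted jobs the one of least index is available, since its
-- predecessors are released no later than it is.
theorem exists_le_start_eq [WellFoundedLT ι] (hS : IsListSchedule p r S prec)
    (hprec_lt : ∀ j k, prec j k → j < k) (hrcons : ∀ j k, prec j k → r j ≤ r k) {t : ℝ}
    (ht : MachineFree p S t) {m : ι} (hrm : r m ≤ t) (hmS : t ≤ S m) :
    ∃ k ≤ m, S k = t := by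
  obtain ⟨m₀, ⟨hr₀, hS₀⟩, hmin⟩ :=
    wellFounded_lt.has_min {k | r k ≤ t ∧ t ≤ S k} ⟨m, hrm, hmS⟩
  have havail : IsAvailable p r S prec t m₀ := ⟨hr₀, hS₀, fun l hl => (ht l).resolve_right
    fun htl => hmin l ⟨(hrcons l m₀ hl).trans hr₀, htl⟩ (hprec_lt l m₀ hl)⟩
  exact ⟨m₀, not_lt.1 (hmin m ⟨hrm, hmS⟩), hS.start_eq_of_isLeast t ht m₀
    ⟨havail, fun k hk => not_lt.1 (hmin k ⟨hk.1, hk.2.1⟩)⟩⟩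

theorem exists_mem_Ico_of_release_le [WellFoundedLT ι] (hS : IsListSchedule p r S prec)
    (hp : ∀ j, 0 < p j) (hprec_lt : ∀ j k, prec j k → j < k)
    (hrcons : ∀ j k, prec j k → r j ≤ r k) {t : ℝ} {m : ι} (hrm : r m ≤ t) (hmS : t ≤ S m) :
    ∃ h, S h ≤ t ∧ t < S h + p h := by
  by_cases ht : MachineFree p S t
  · obtain ⟨k, -, rfl⟩ := hS.exists_le_start_eq hprec_lt hrcons ht hrm hmS
    exact ⟨k, le_rfl, lt_add_of_pos_right _ (hp k)⟩
  · simp only [MachineFree, not_forall, not_or, not_le] at ht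
    obtain ⟨h, hCh, hSh⟩ := ht
    exact ⟨h, hSh.le, hCh⟩

variable [Fintype ι]

theorem le_two_mul_release (hS : IsListSchedule p r S prec) (hp : ∀ j, 0 < p j)
    (hpr : ∀ j, p j ≤ r j) (hprec_lt : ∀ j k, prec j k → j < k)
    (hrcons : ∀ j k, prec j k → r j ≤ r k) {j k₀ : ι} (hbusy : IsBusyFrom p S j (S k₀))
    (hmin : ∀ h, IsBusyFrom p S j (S h) → S k₀ ≤ S h) {k : ι} (hkj : k ≤ j)
    (hk : S k₀ ≤ S k) : S k₀ ≤ 2 * r k := by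
  rcases le_or_gt (S k₀) (r k) with hrk | hrk
  · linarith [hp k, hpr k]
  obtain ⟨h, hSh, hCh⟩ := exists_lt_le_of_forall_mem_Ico S (S + p) hrk fun t ht =>
    hS.exists_mem_Ico_of_release_le hp hprec_lt hrcons ht.1 (ht.2.le.trans hk)
  have hCh' : S h + p h = S k₀ := by
    refine le_antisymm ?_ hCh
    rcases hS.disjoint h k₀ (hS.start_injective hp |>.ne_iff.1 hSh.ne) with h' | h'
    · linarith [hp k₀]
    · exact h'
  have hjh : j < h := lt_of_not_ge fun hhj =>
    (hmin h (hbusy.of_start hhj hCh)).not_gt hSh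
  have hrel : S h < r k := by
    by_contra! hle
    obtain ⟨x, hxk, hx⟩ := hS.exists_le_start_eq hprec_lt hrcons (hS.machineFree_start hp h)
      hle (hSh.le.trans hk)
    obtain rfl := hS.start_injective hp hx
    exact (hxk.trans hkj).not_gt hjh
  linarith [hpr h, hS.release_le h]

theorem exists_block (hS : IsListSchedule p r S prec) (hp : ∀ j, 0 < p j)
    (hpr : ∀ j, p j ≤ r j) (hprec_lt : ∀ j k, prec j k → j < k)
    (hrcons : ∀ j k, prec j k → r j ≤ r k) (j : ι) :
    ∃ (V : Finset ι) (hV : V.Nonempty), (∀ k ∈ V, k ≤ j) ∧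
      S j + p j ≤ 2 * V.inf' hV r + ∑ k ∈ V, p k := by
  classical
  obtain ⟨k₀, hk₀, hmin⟩ := (univ.filter fun k => IsBusyFrom p S j (S k)).exists_min_image S
    ⟨j, Finset.mem_filter.2 ⟨mem_univ j, isBusyFrom_start j⟩⟩
  simp only [Finset.mem_filter, Finset.mem_univ, true_and] at hk₀ hmin
  set V := univ.filter fun k => k ≤ j ∧ S k₀ ≤ S k
  have hmemV : ∀ {k}, k ∈ V ↔ k ≤ j ∧ S k₀ ≤ S k := by simp [V]
  have hjV : j ∈ V := hmemV.2 ⟨le_rfl, hmin j (isBusyFrom_start j)⟩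
  have hV : V.Nonempty := ⟨j, hjV⟩
  have hτ : S k₀ / 2 ≤ V.inf' hV r := Finset.le_inf' _ _ fun k hk => by
    have := hS.le_two_mul_release hp hpr hprec_lt hrcons hk₀ hmin (hmemV.1 hk).1 (hmemV.1 hk).2
    linarith
  have hcov : S j + p j - S k₀ ≤ ∑ k ∈ V, p k := by
    refine sub_le_sum_of_forall_mem_Ico (s := S) V (fun k _ => (hp k).le) fun t ht => ?_
    obtain ⟨h, hhj, h₁, h₂⟩ := hk₀ t ht
    refine ⟨h, hmemV.2 ⟨hhj, ?_⟩, h₁, h₂⟩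
    by_contra! hlt
    exact (hmin h (hk₀.of_start hhj (ht.1.trans h₂.le))).not_gt hlt
  exact ⟨V, hV, fun k hk => (hmemV.1 hk).1, by linarith⟩

end IsListSchedule

end Scheduling

theorem lp_list_scheduling_two_approx_small_jobs_general
    {n : ℕ} (p r w C : Fin n → ℝ) (prec : Fin n → Fin n → Prop)
    (hp : ∀ j, 0 < p j) (hw : ∀ j, 0 ≤ w j)
    (hpr : ∀ j, p j ≤ r j)
    (hprec_lt : ∀ j k, prec j k → j < k)
    (hrcons : ∀ j k, prec j k → r j ≤ r k)
    (hCmono : ∀ j k : Fin n, j ≤ k → C j ≤ C k)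
    (hLP : ∀ (U : Finset (Fin n)) (hU : U.Nonempty),
      U.inf' hU r * ∑ j ∈ U, p j + (∑ j ∈ U, p j) ^ 2 / 2 ≤ ∑ j ∈ U, p j * C j)
    (S : Fin n → ℝ)
    (hrel : ∀ j, r j ≤ S j)
    (hdisj : ∀ j k, j ≠ k → S k + p k ≤ S j ∨ S j + p j ≤ S k)
    (hLS : ∀ t : ℝ, (∀ h, S h + p h ≤ t ∨ t ≤ S h) →
      ∀ j, (r j ≤ t ∧ t ≤ S j ∧ ∀ k, prec k j → S k + p k ≤ t) →
        (∀ k, (r k ≤ t ∧ t ≤ S k ∧ ∀ l, prec l k → S l + p l ≤ t) → j ≤ k) →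
        S j = t) :
    ∑ j, w j * (S j + p j) ≤ 2 * ∑ j, w j * C j := by
  have hS : IsListSchedule p r S prec :=
    ⟨hrel, hdisj, fun t ht j hj => hLS t ht j hj.1 fun k hk => hj.2 hk⟩
  have hcompl : ∀ j, S j + p j ≤ 2 * C j := fun j => by
    obtain ⟨V, hV, hVj, hblock⟩ := hS.exists_block hp hpr hprec_lt hrcons j
    linarith [inf'_add_half_sum_le_of_parallel hV (fun k _ => hp k)
      (fun k hk => hCmono k j (hVj k hk)) (hLP V hV)]
  calc ∑ j, w j * (S j + p j) ≤ ∑ j, w j * (2 * C j) :=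
        Finset.sum_le_sum fun j _ => mul_le_mul_of_nonneg_left (hcompl j) (hw j)
    _ = 2 * ∑ j, w j * C j := by
        rw [Finset.mul_sum]
        exact Finset.sum_congr rfl fun j _ => by ring

/-- Theorem 1 of the paper: If `p j ≤ r j` for every job, release dates are
consistent with precedence constraints, `C` satisfies the parallel inequalities and is
nondecreasing in the job index (jobs are listed in LP order, consistent with `≺`), and `σ`
is a feasible schedule with the list-scheduling property for this order, then the weighted
sum of completion times of `σ` is at most twice the LP objective. -/
theorem lp_list_scheduling_two_approx_small_jobs
    {n : ℕ} (p r w C : Fin n → ℝ) (prec : Fin n → Fin n → Prop)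
    (hp : ∀ j, 0 < p j) (hr : ∀ j, 0 ≤ r j) (hw : ∀ j, 0 ≤ w j)
    (hpr : ∀ j, p j ≤ r j)
    (hprec_lt : ∀ j k, prec j k → j < k)
    (htrans : ∀ i j k, prec i j → prec j k → prec i k)
    (hrcons : ∀ j k, prec j k → r j ≤ r k)
    (hCmono : ∀ j k : Fin n, j ≤ k → C j ≤ C k)
    (hLP : ∀ (U : Finset (Fin n)) (hU : U.Nonempty),
      U.inf' hU r * ∑ j ∈ U, p j + (∑ j ∈ U, p j) ^ 2 / 2 ≤ ∑ j ∈ U, p j * C j)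
    (S : Fin n → ℝ)
    (hrel : ∀ j, r j ≤ S j)
    (hdisj : ∀ j k, j ≠ k → S k + p k ≤ S j ∨ S j + p j ≤ S k)
    (hprecS : ∀ j k, prec j k → S j + p j ≤ S k)
    (hLS : ∀ t : ℝ, (∀ h, S h + p h ≤ t ∨ t ≤ S h) →
      ∀ j, (r j ≤ t ∧ t ≤ S j ∧ ∀ k, prec k j → S k + p k ≤ t) →
        (∀ k, (r k ≤ t ∧ t ≤ S k ∧ ∀ l, prec l k → S l + p l ≤ t) → j ≤ k) →
        S j = t) :
    ∑ j, w j * (S j + p j) ≤ 2 * ∑ j, w j * C j :=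
  lp_list_scheduling_two_approx_small_jobs_general p r w C prec hp hw hpr hprec_lt hrcons hCmono hLP
    S hrel hdisj hLS
end

section
/- Let 0 < t and t' be reals with t' ≥ 3t. Let J' be a set of jobs with p_j > 0, r_j ≤ t' for all j ∈ J', and Σ_{j∈J'} p_j ≤ 2t'. Then every tight feasible schedule of J' subject to the additional constraint that no job starts before time 3t is contained in the interval [3t, 3t']: every job starts at or after 3t and completes at or before 3t'. -/
/-!
In a tight schedule every job starts at the lower bound `3t`, at its release time, or at the
completion time of another job: otherwise it could be moved earlier, to the latest of these
times below its start. Following such completions backwards (start times strictly decrease,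
since all processing times are positive) ends at a job starting at or before `t'`, so every
start time is at most `t'` plus the processing times of the jobs completed before it, and every
completion time at most `t' + ∑ p ≤ 3t'`.
-/

/-- A feasible schedule of the instance `(p, r, prec)` subject to the additional
constraint that every job starts at or after time `L`. -/
def FeasibleFrom {n : ℕ} (p r : Fin n → ℝ) (prec : Fin n → Fin n → Prop) (L : ℝ)
    (S : Fin n → ℝ) : Prop :=
  (∀ j, L ≤ S j) ∧ (∀ j, r j ≤ S j) ∧
  (∀ j k, j ≠ k → S k + p k ≤ S j ∨ S j + p j ≤ S k) ∧
  (∀ j k, prec j k → S j + p j ≤ S k)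

open Finset

def IsTightFrom {n : ℕ} (p r : Fin n → ℝ) (prec : Fin n → Fin n → Prop) (L : ℝ)
    (S : Fin n → ℝ) : Prop :=
  ∀ j s, L ≤ s → s < S j → ¬ FeasibleFrom p r prec L (Function.update S j s)

section Feasibility

variable {n : ℕ} {p r : Fin n → ℝ} {prec : Fin n → Fin n → Prop} {L : ℝ} {S : Fin n → ℝ}

theorem FeasibleFrom.update_of_le (hS : FeasibleFrom p r prec L S) {j : Fin n} {s : ℝ}
    (hLs : L ≤ s) (hrs : r j ≤ s) (hsS : s ≤ S j)
    (hbefore : ∀ k, k ≠ j → S k + p k ≤ S j → S k + p k ≤ s) :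
    FeasibleFrom p r prec L (Function.update S j s) := by
  obtain ⟨hL, hR, hD, hP⟩ := hS
  refine ⟨fun i => ?_, fun i => ?_, fun i k hik => ?_, fun i k hik => ?_⟩
  · rcases eq_or_ne i j with rfl | hij
    · simpa using hLs
    · simpa [hij] using hL i
  · rcases eq_or_ne i j with rfl | hij
    · simpa using hrs
    · simpa [hij] using hR i
  · rcases eq_or_ne i j with rfl | hij
    · simp only [Function.update_self, Function.update_of_ne hik.symm]
      exact (hD i k hik).imp (hbefore k hik.symm) (by intro; linarith)
    rcases eq_or_ne k j with rfl | hkj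
    · simp only [Function.update_self, Function.update_of_ne hij]
      exact (hD i k hik).imp (by intro; linarith) (hbefore i hij)
    · simpa [hij, hkj] using hD i k hik
  · have hik' := hP i k hik
    rcases eq_or_ne i j with rfl | hij
    · rcases eq_or_ne k i with rfl | hki
      · simp only [Function.update_self]; linarith
      · simp only [Function.update_self, Function.update_of_ne hki]; linarith
    rcases eq_or_ne k j with rfl | hkj
    · simpa [hij] using hbefore i hij hik'
    · simpa [hij, hkj] using hik'

theorem IsTightFrom.le_max_or_exists_completion_eq (hT : IsTightFrom p r prec L S)
    (hS : FeasibleFrom p r prec L S) (j : Fin n) :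
    S j ≤ max L (r j) ∨ ∃ k, k ≠ j ∧ S k + p k = S j := by
  by_contra! hcon
  obtain ⟨hmax, hne⟩ := hcon
  let times : Finset ℝ :=
    insert L (insert (r j) (({k | k ≠ j ∧ S k + p k ≤ S j} : Finset (Fin n)).image
      fun k => S k + p k))
  let s := times.max' (insert_nonempty _ _)
  have hle : ∀ x ∈ times, x ≤ s := fun x hx => times.le_max' x hx
  have hslt : s < S j := by
    refine (times.max'_lt_iff _).2 fun x hx => ?_
    simp only [times, mem_insert, mem_image, mem_filter, mem_univ, true_and] at hx
    rcases hx with rfl | rfl | ⟨k, ⟨hkj, hkS⟩, rfl⟩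
    · exact (le_max_left _ _).trans_lt hmax
    · exact (le_max_right _ _).trans_lt hmax
    · exact hkS.lt_of_ne (hne k hkj)
  have hLs : L ≤ s := hle L (by simp [times])
  refine hT j s hLs hslt (hS.update_of_le hLs (hle (r j) (by simp [times])) hslt.le ?_)
  exact fun k hkj hkS => hle _ <| mem_insert_of_mem <| mem_insert_of_mem <|
    mem_image_of_mem _ (by simp [hkj, hkS])

end Feasibility

section Chains

variable {ι : Type*} [Fintype ι] {p S : ι → ℝ} {B : ℝ}

theorem start_le_add_sum_completed_before (hp : ∀ j, 0 < p j)
    (hchain : ∀ j, S j ≤ B ∨ ∃ k, S k + p k = S j) (j : ι) :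
    S j ≤ B + ∑ k with S k + p k ≤ S j, p k := by
  classical
  have : IsTrans ι (fun a b => S a < S b) := ⟨fun _ _ _ => lt_trans⟩
  have : Std.Irrefl (fun a b : ι => S a < S b) := ⟨fun _ => lt_irrefl _⟩
  induction j using (Finite.wellFounded_of_trans_of_irrefl fun a b : ι => S a < S b).induction
    with
  | _ j ih =>
  rcases hchain j with hB | ⟨k, hk⟩
  · linarith [sum_nonneg fun k (_ : k ∈ ({k | S k + p k ≤ S j} : Finset ι)) => (hp k).le]
  have hkj : S k < S j := by linarith [hp k]
  set before_k : Finset ι := {l | S l + p l ≤ S k}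
  have hsub : insert k before_k ⊆ ({l | S l + p l ≤ S j} : Finset ι) := by
    intro l hl
    simp only [before_k, mem_insert, mem_filter, mem_univ, true_and] at hl ⊢
    rcases hl with rfl | hl
    · exact hk.le
    · linarith
  have hk_notMem : k ∉ before_k := by simpa [before_k] using hp k
  calc S j = S k + p k := hk.symm
    _ ≤ B + ∑ l ∈ before_k, p l + p k := by linarith [ih k hkj]
    _ = B + ∑ l ∈ insert k before_k, p l := by rw [sum_insert hk_notMem]; ring
    _ ≤ B + ∑ l with S l + p l ≤ S j, p l :=
        add_le_add_right (sum_le_sum_of_subset_of_nonneg hsub fun l _ _ => (hp l).le) B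

theorem completion_le_add_sum (hp : ∀ j, 0 < p j)
    (hchain : ∀ j, S j ≤ B ∨ ∃ k, S k + p k = S j) (j : ι) :
    S j + p j ≤ B + ∑ k, p k := by
  classical
  have hj_notMem : j ∉ ({k | S k + p k ≤ S j} : Finset ι) := by simpa using hp j
  have hsum : p j + ∑ k with S k + p k ≤ S j, p k ≤ ∑ k, p k := by
    rw [← sum_insert hj_notMem]
    exact sum_le_sum_of_subset_of_nonneg (subset_univ _) fun l _ _ => (hp l).le
  linarith [start_le_add_sum_completed_before hp hchain j]

end Chains

theorem tight_schedule_in_interval_general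
    {n : ℕ} (p r : Fin n → ℝ) (prec : Fin n → Fin n → Prop)
    (hp : ∀ j, 0 < p j)
    (t t' : ℝ) (htt' : 3 * t ≤ t')
    (hrle : ∀ j, r j ≤ t')
    (hsum : ∑ j, p j ≤ 2 * t')
    (S : Fin n → ℝ)
    (hfeas : FeasibleFrom p r prec (3 * t) S)
    (htight : ∀ j s, 3 * t ≤ s → s < S j →
      ¬ FeasibleFrom p r prec (3 * t) (Function.update S j s)) :
    ∀ j, 3 * t ≤ S j ∧ S j + p j ≤ 3 * t' := by
  have hT : IsTightFrom p r prec (3 * t) S := htight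
  have hchain : ∀ j, S j ≤ t' ∨ ∃ k, S k + p k = S j := fun j =>
    (hT.le_max_or_exists_completion_eq hfeas j).imp
      (fun h => h.trans (max_le htt' (hrle j))) fun ⟨k, _, hk⟩ => ⟨k, hk⟩
  intro j
  exact ⟨hfeas.1 j, by linarith [completion_le_add_sum hp hchain j]⟩

/-- Lemma 5 of the paper: If `0 < t`, `t' ≥ 3t`, all release times are at
most `t'` and the total processing time is at most `2t'`, then every tight feasible
schedule in which no job starts before `3t` is contained in the interval `[3t, 3t']`. -/
theorem tight_schedule_in_interval
    {n : ℕ} (p r : Fin n → ℝ) (prec : Fin n → Fin n → Prop)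
    (hp : ∀ j, 0 < p j) (hr : ∀ j, 0 ≤ r j)
    (hprec_lt : ∀ j k, prec j k → j < k)
    (htrans : ∀ i j k, prec i j → prec j k → prec i k)
    (t t' : ℝ) (ht : 0 < t) (htt' : 3 * t ≤ t')
    (hrle : ∀ j, r j ≤ t')
    (hsum : ∑ j, p j ≤ 2 * t')
    (S : Fin n → ℝ)
    (hfeas : FeasibleFrom p r prec (3 * t) S)
    (htight : ∀ j s, 3 * t ≤ s → s < S j →
      ¬ FeasibleFrom p r prec (3 * t) (Function.update S j s)) :
    ∀ j, 3 * t ≤ S j ∧ S j + p j ≤ 3 * t' :=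
  tight_schedule_in_interval_general p r prec hp t t' htt' hrle hsum S hfeas htight
end

section
/- Fix reals a > 0 and c > 0. For b ∈ [0, a] let T(b) = e^{a·⌊(ln c − b)/a⌋ + b}, i.e., T(b) is the largest number of the form e^{ak + b} with k ∈ ℤ that is at most c. If b is uniformly distributed on [0, a], then E[T(b)] = c·(1 − e^{−a})/a, and in particular E[T(b)] < c/a. -/
open MeasureTheory

/-!
The point `a⌊(x - b)/a⌋ + b` is the largest element of `b + aℤ` that is at most `x`, so as a
function of `b` it is `a`-periodic, and on the fundamental domain `(x - a, x]` it is just `b`.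
Hence averaging any function of it over a period `[0, a]` is the same as averaging the function
itself over `(x - a, x]`; for `exp` and `x = log c` this gives `(c - c e^{-a}) / a`.
-/

variable {E : Type*} [NormedAddCommGroup E] [NormedSpace ℝ E]

namespace Real

theorem periodic_mul_floor_sub_div_add (a x : ℝ) :
    Function.Periodic (fun b => a * ⌊(x - b) / a⌋ + b) a := by
  intro b
  rcases eq_or_ne a 0 with rfl | ha
  · simp
  have : (x - (b + a)) / a = (x - b) / a - 1 := by field_simp; ring
  simp only [this, Int.floor_sub_one, Int.cast_sub, Int.cast_one]
  ring

theorem mul_floor_sub_div_add_of_mem_Ioc {a x b : ℝ} (ha : 0 < a) (hb : b ∈ Set.Ioc (x - a) x) :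
    a * ⌊(x - b) / a⌋ + b = b := by
  have : ⌊(x - b) / a⌋ = 0 := by
    rw [Int.floor_eq_zero_iff, Set.mem_Ico, le_div_iff₀ ha, div_lt_iff₀ ha]
    constructor <;> linarith [hb.1, hb.2]
  simp [this]

theorem intervalIntegral_comp_mul_floor_sub_div_add {a : ℝ} (ha : 0 < a) (x : ℝ) (f : ℝ → E) :
    ∫ b in (0)..a, f (a * ⌊(x - b) / a⌋ + b) = ∫ b in (x - a)..x, f b := by
  have hper := ((periodic_mul_floor_sub_div_add a x).comp f).intervalIntegral_add_eq 0 (x - a)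
  rw [zero_add, sub_add_cancel] at hper
  refine hper.trans <|
    intervalIntegral.integral_congr_ae (Filter.Eventually.of_forall fun b hb => ?_)
  rw [Set.uIoc_of_le (by linarith)] at hb
  simp only [Function.comp_apply, mul_floor_sub_div_add_of_mem_Ioc ha hb]

end Real

open Real in
theorem setAverage_Icc_zero_eq_intervalIntegral {a : ℝ} (ha : 0 ≤ a) (f : ℝ → E) :
    ⨍ b in Set.Icc 0 a, f b = a⁻¹ • ∫ b in (0)..a, f b := by
  rw [setAverage_eq, volume_real_Icc_of_le ha, integral_Icc_eq_integral_Ioc,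
    ← intervalIntegral.integral_of_le ha, sub_zero]

/-- For `a > 0`, `c > 0` and `b` uniformly distributed on `[0, a]`, the
expectation of `T(b) = e^{a⌊(ln c − b)/a⌋ + b}` (the largest number of the form
`e^{ak + b}`, `k ∈ ℤ`, that is at most `c`) equals `c (1 − e^{−a}) / a`; in particular
it is less than `c / a`. -/
theorem expected_rounded_point
    (a c : ℝ) (ha : 0 < a) (hc : 0 < c) :
    (⨍ b in Set.Icc (0 : ℝ) a,
        Real.exp (a * (⌊(Real.log c - b) / a⌋ : ℝ) + b))
      = c * (1 - Real.exp (-a)) / a ∧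
    (⨍ b in Set.Icc (0 : ℝ) a,
        Real.exp (a * (⌊(Real.log c - b) / a⌋ : ℝ) + b)) < c / a := by
  have havg : (⨍ b in Set.Icc (0 : ℝ) a,
      Real.exp (a * (⌊(Real.log c - b) / a⌋ : ℝ) + b)) = c * (1 - Real.exp (-a)) / a := by
    rw [setAverage_Icc_zero_eq_intervalIntegral ha.le,
      Real.intervalIntegral_comp_mul_floor_sub_div_add ha _ Real.exp, integral_exp,
      Real.exp_sub, Real.exp_log hc, Real.exp_neg, smul_eq_mul]
    field_simp
  refine ⟨havg, havg ▸ div_lt_div_of_pos_right ?_ ha⟩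
  exact mul_lt_of_lt_one_right hc (sub_lt_self 1 (Real.exp_pos (-a)))
end

section
/- Let σ* be a feasible schedule of a single-machine instance with p_j > 0 and r_j ≥ 0, with jobs indexed so that C^{σ*}_1 ≤ C^{σ*}_2 ≤ … ≤ C^{σ*}_n and j < k whenever j ≺ k, and let ε > 0. Then there exists a feasible schedule σ' of the same instance in which each start time S'_j is an integer multiple of ε·p_j and C^{σ'}_j ≤ C^{σ*}_j + ε·Σ_{k≤j} p_k ≤ (1+ε)·C^{σ*}_j for every job j. -/
/-!
Sorted completion times together with disjointness force the jobs to run in index order,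
so `S j ≥ ∑_{k<j} p k`. Delay job `j` by `ε ∑_{k<j} p k` and round up to a multiple of
`ε p j`: for `i < j` the delays differ by at least `ε p i`, which absorbs the rounding error of
job `i`, so the order (hence feasibility) survives, and the completion time of `j` grows by
less than `ε ∑_{k≤j} p k ≤ ε C_j`.
-/

open Finset

lemma le_ceil_div_mul {x u : ℝ} (hu : 0 < u) : x ≤ ⌈x / u⌉ * u :=
  (div_le_iff₀ hu).mp (Int.le_ceil _)

lemma ceil_div_mul_lt {x u : ℝ} (hu : 0 < u) : ⌈x / u⌉ * u < x + u := by
  calc (⌈x / u⌉ : ℝ) * u < (x / u + 1) * u := by gcongr; exact Int.ceil_lt_add_one _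
    _ = x + u := by field_simp

section Schedule

variable {ι : Type*} [LinearOrder ι] {p S : ι → ℝ}

lemma completion_le_start_of_lt_of_sorted (hp : ∀ j, 0 < p j)
    (hdisj : ∀ j k, j ≠ k → S k + p k ≤ S j ∨ S j + p j ≤ S k)
    (hsorted : ∀ j k, j ≤ k → S j + p j ≤ S k + p k) {j k : ι} (hjk : j < k) :
    S j + p j ≤ S k := by
  rcases hdisj j k hjk.ne with h | h
  · linarith [hsorted j k hjk.le, hp j]
  · exact h

lemma disjoint_of_completion_le_start_of_lt (hgap : ∀ i j, i < j → S i + p i ≤ S j)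
    {j k : ι} (hjk : j ≠ k) : S k + p k ≤ S j ∨ S j + p j ≤ S k := by
  rcases hjk.lt_or_gt with h | h
  · exact Or.inr (hgap j k h)
  · exact Or.inl (hgap k j h)

lemma sum_le_start_of_forall_lt (hS : ∀ j, 0 ≤ S j) (hgap : ∀ i j, i < j → S i + p i ≤ S j)
    (s : Finset ι) {j : ι} (hs : ∀ k ∈ s, k < j) : ∑ k ∈ s, p k ≤ S j := by
  classical
  induction s using Finset.induction_on_max generalizing j with
  | empty => simpa using hS j
  | insert a s has ih =>
    have ha : a < j := hs a (mem_insert_self a s)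
    rw [sum_insert fun h => (has a h).false]
    linarith [ih (j := a) has, hgap a j ha]

variable [LocallyFiniteOrderBot ι]

lemma sum_Iic_eq_sum_Iio_add (p : ι → ℝ) (j : ι) :
    ∑ k ∈ Iic j, p k = ∑ k ∈ Iio j, p k + p j := by
  rw [Iic_eq_cons_Iio, sum_cons, add_comm]

noncomputable def roundedStart (p S : ι → ℝ) (ε : ℝ) (j : ι) : ℝ :=
  ⌈(S j + ε * ∑ k ∈ Iio j, p k) / (ε * p j)⌉ * (ε * p j)

variable {ε : ℝ}

lemma le_roundedStart (hε : 0 < ε) (hp : ∀ j, 0 < p j) (j : ι) :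
    S j + ε * ∑ k ∈ Iio j, p k ≤ roundedStart p S ε j :=
  le_ceil_div_mul (mul_pos hε (hp j))

lemma roundedStart_lt (hε : 0 < ε) (hp : ∀ j, 0 < p j) (j : ι) :
    roundedStart p S ε j < S j + ε * ∑ k ∈ Iic j, p k := by
  have := ceil_div_mul_lt (x := S j + ε * ∑ k ∈ Iio j, p k) (mul_pos hε (hp j))
  rw [sum_Iic_eq_sum_Iio_add]
  unfold roundedStart
  linarith

lemma start_le_roundedStart (hε : 0 < ε) (hp : ∀ j, 0 < p j) (j : ι) :
    S j ≤ roundedStart p S ε j := by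
  have : 0 ≤ ε * ∑ k ∈ Iio j, p k := by
    have := sum_nonneg fun k (_ : k ∈ Iio j) => (hp k).le
    positivity
  linarith [le_roundedStart (S := S) hε hp j]

lemma roundedStart_add_le_of_lt (hε : 0 < ε) (hp : ∀ j, 0 < p j)
    (hgap : ∀ i j, i < j → S i + p i ≤ S j) {i j : ι} (hij : i < j) :
    roundedStart p S ε i + p i ≤ roundedStart p S ε j := by
  have hsum : ∑ k ∈ Iic i, p k ≤ ∑ k ∈ Iio j, p k :=
    sum_le_sum_of_subset_of_nonneg (fun k hk => mem_Iio.mpr ((mem_Iic.mp hk).trans_lt hij))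
      fun k _ _ => (hp k).le
  have := mul_le_mul_of_nonneg_left hsum hε.le
  linarith [roundedStart_lt (S := S) hε hp i, le_roundedStart (S := S) hε hp j, hgap i j hij]

end Schedule

theorem rounded_start_times_schedule_general
    {n : ℕ} (p r : Fin n → ℝ) (prec : Fin n → Fin n → Prop)
    (hp : ∀ j, 0 < p j) (hr : ∀ j, 0 ≤ r j)
    (hprec_lt : ∀ j k, prec j k → j < k)
    (S : Fin n → ℝ)
    (hrel : ∀ j, r j ≤ S j)
    (hdisj : ∀ j k, j ≠ k → S k + p k ≤ S j ∨ S j + p j ≤ S k)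
    (hsorted : ∀ j k : Fin n, j ≤ k → S j + p j ≤ S k + p k)
    (ε : ℝ) (hε : 0 < ε) :
    ∃ S' : Fin n → ℝ,
      (∀ j, r j ≤ S' j) ∧
      (∀ j k, j ≠ k → S' k + p k ≤ S' j ∨ S' j + p j ≤ S' k) ∧
      (∀ j k, prec j k → S' j + p j ≤ S' k) ∧
      (∀ j, ∃ m : ℤ, S' j = m * (ε * p j)) ∧
      (∀ j, S' j + p j ≤ S j + p j + ε * ∑ k ∈ Finset.Iic j, p k ∧
        S j + p j + ε * ∑ k ∈ Finset.Iic j, p k ≤ (1 + ε) * (S j + p j)) := by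
  have hgap : ∀ i j, i < j → S i + p i ≤ S j := fun i j =>
    completion_le_start_of_lt_of_sorted hp hdisj hsorted
  have hgap' : ∀ i j, i < j → roundedStart p S ε i + p i ≤ roundedStart p S ε j :=
    fun i j => roundedStart_add_le_of_lt hε hp hgap
  have hsum : ∀ j, ∑ k ∈ Iic j, p k ≤ S j + p j := fun j => by
    rw [sum_Iic_eq_sum_Iio_add]
    linarith [sum_le_start_of_forall_lt (fun j => (hr j).trans (hrel j)) hgap (Iio j)
      (j := j) fun k => mem_Iio.mp]
  refine ⟨roundedStart p S ε, fun j => (hrel j).trans (start_le_roundedStart hε hp j),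
    fun j k => disjoint_of_completion_le_start_of_lt hgap',
    fun j k h => hgap' j k (hprec_lt j k h), fun j => ⟨_, rfl⟩, fun j => ⟨?_, ?_⟩⟩
  · linarith [roundedStart_lt (S := S) hε hp j]
  · nlinarith [hsum j]

/-- Section 4.1 of the paper: Given a feasible schedule `σ*` with jobs
indexed in order of completion times and consistently with the precedence order, and
`ε > 0`, there is a feasible schedule `σ'` in which every start time is an integer
multiple of `ε · p j` and `C^{σ'}_j ≤ C^{σ*}_j + ε Σ_{k ≤ j} p k ≤ (1+ε) C^{σ*}_j`. -/
theorem rounded_start_times_schedule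
    {n : ℕ} (p r : Fin n → ℝ) (prec : Fin n → Fin n → Prop)
    (hp : ∀ j, 0 < p j) (hr : ∀ j, 0 ≤ r j)
    (hprec_lt : ∀ j k, prec j k → j < k)
    (htrans : ∀ i j k, prec i j → prec j k → prec i k)
    (S : Fin n → ℝ)
    (hrel : ∀ j, r j ≤ S j)
    (hdisj : ∀ j k, j ≠ k → S k + p k ≤ S j ∨ S j + p j ≤ S k)
    (hprecS : ∀ j k, prec j k → S j + p j ≤ S k)
    (hsorted : ∀ j k : Fin n, j ≤ k → S j + p j ≤ S k + p k)
    (ε : ℝ) (hε : 0 < ε) :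
    ∃ S' : Fin n → ℝ,
      (∀ j, r j ≤ S' j) ∧
      (∀ j k, j ≠ k → S' k + p k ≤ S' j ∨ S' j + p j ≤ S' k) ∧
      (∀ j k, prec j k → S' j + p j ≤ S' k) ∧
      (∀ j, ∃ m : ℤ, S' j = m * (ε * p j)) ∧
      (∀ j, S' j + p j ≤ S j + p j + ε * ∑ k ∈ Finset.Iic j, p k ∧
        S j + p j + ε * ∑ k ∈ Finset.Iic j, p k ≤ (1 + ε) * (S j + p j)) :=
  rounded_start_times_schedule_general p r prec hp hr hprec_lt S hrel hdisj hsorted ε hε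
end

section
/- Let 0 < L ≤ M and let σ be a feasible schedule of a single-machine instance with p_j > 0 in which every job j satisfies S_j ≥ L and C^σ_j ≤ M. Call a job j early if S_j < p_j. Then the number of early jobs is at most log₂(M/L). -/
/-!
Order the early jobs by start time. An early job `j` finishes at `S j + p j > 2 * S j`, and the
next early job cannot start before that, so the start times of the early jobs at least double from
one to the next. Starting at `L` or later and finishing by `M`, there can be at most
`log₂ (M / L)` of them.
-/

open Finset

section EarlyJobs

variable {ι : Type*} {S p : ι → ℝ}

lemma end_le_start_of_start_le
    (hdisj : ∀ j k, j ≠ k → S k + p k ≤ S j ∨ S j + p j ≤ S k)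
    {j k : ι} (hk : 0 < p k) (hjk : j ≠ k) (hle : S j ≤ S k) : S j + p j ≤ S k :=
  (hdisj j k hjk).resolve_left fun h => by linarith

lemma two_pow_card_mul_le_of_early (hp : ∀ j, 0 < p j)
    (hdisj : ∀ j k, j ≠ k → S k + p k ≤ S j ∨ S j + p j ≤ S k)
    {L : ℝ} (s : Finset ι) (hearly : ∀ j ∈ s, S j < p j) (hstart : ∀ j ∈ s, L ≤ S j)
    {T : ℝ} (hLT : L ≤ T) (hend : ∀ j ∈ s, S j + p j ≤ T) : 2 ^ #s * L ≤ T := by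
  classical
  induction s using Finset.induction_on_max_value S generalizing T with
  | empty => simpa using hLT
  | insert a s ha hmax ih =>
    have hLa : L ≤ S a := hstart a (mem_insert_self a s)
    have hprev : 2 ^ #s * L ≤ S a :=
      ih (fun j hj => hearly j (mem_insert_of_mem hj)) (fun j hj => hstart j (mem_insert_of_mem hj))
        hLa fun j hj => end_le_start_of_start_le hdisj (hp a) (ne_of_mem_of_not_mem hj ha) (hmax j hj)
    have haearly := hearly a (mem_insert_self a s)
    have haend := hend a (mem_insert_self a s)
    calc 2 ^ #(insert a s) * L = 2 * (2 ^ #s * L) := by rw [card_insert_of_notMem ha]; ring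
      _ ≤ 2 * S a := by linarith
      _ ≤ T := by linarith

end EarlyJobs

theorem number_of_early_jobs_bound_general
    {n : ℕ} (p : Fin n → ℝ)
    (hp : ∀ j, 0 < p j)
    (L M : ℝ) (hL : 0 < L) (hLM : L ≤ M)
    (S : Fin n → ℝ)
    (hdisj : ∀ j k, j ≠ k → S k + p k ≤ S j ∨ S j + p j ≤ S k)
    (hwindow : ∀ j, L ≤ S j ∧ S j + p j ≤ M) :
    (({j : Fin n | S j < p j}.ncard : ℝ) ≤ Real.logb 2 (M / L)) := by
  classical
  set early := univ.filter fun j => S j < p j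
  have hcard : {j : Fin n | S j < p j}.ncard = #early := by
    rw [← Set.ncard_coe_finset, coe_filter]
    simp only [mem_univ, true_and]
  have hbound : (2 : ℝ) ^ #early * L ≤ M :=
    two_pow_card_mul_le_of_early hp hdisj early (fun j hj => (mem_filter.mp hj).2)
      (fun j _ => (hwindow j).1) hLM fun j _ => (hwindow j).2
  rw [hcard, Real.le_logb_iff_rpow_le one_lt_two (div_pos (hL.trans_le hLM) hL), Real.rpow_natCast]
  exact (le_div_iff₀ hL).mpr hbound

/-- Lemma 7 of the paper: In a feasible schedule in which every job starts
at or after `L > 0` and completes by `M ≥ L`, the number of early jobs (jobs `j` with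
`S j < p j`) is at most `log₂(M / L)`. -/
theorem number_of_early_jobs_bound
    {n : ℕ} (p r : Fin n → ℝ) (prec : Fin n → Fin n → Prop)
    (hp : ∀ j, 0 < p j) (hr : ∀ j, 0 ≤ r j)
    (hprec_lt : ∀ j k, prec j k → j < k)
    (htrans : ∀ i j k, prec i j → prec j k → prec i k)
    (L M : ℝ) (hL : 0 < L) (hLM : L ≤ M)
    (S : Fin n → ℝ)
    (hrel : ∀ j, r j ≤ S j)
    (hdisj : ∀ j k, j ≠ k → S k + p k ≤ S j ∨ S j + p j ≤ S k)
    (hprecS : ∀ j k, prec j k → S j + p j ≤ S k)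
    (hwindow : ∀ j, L ≤ S j ∧ S j + p j ≤ M) :
    (({j : Fin n | S j < p j}.ncard : ℝ) ≤ Real.logb 2 (M / L)) :=
  number_of_early_jobs_bound_general p hp L M hL hLM S hdisj hwindow
end
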